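/- Let N ≥ 1 be an integer, p ∈ (0,1), d ≥ 0 an integer, and n an integer with 0 ≤ n ≤ N. Then for every integer x with 0 ≤ x ≤ N−1, K̂_n^{(4,d)}(x;p,N) = γ*_{n,d,N} · p^{−x}·(p−1)^x · K̂_{N−n}^{(2,d)}(N−x−1;p,N), where γ*_{n,d,N} = (n+d+1) · p^n·(p−1)^{n−N+1}·(−N)_n / ((−1)^{d+1}·(−N)_{N−n}). -/

import Mathlib

open Polynomial

/-- Pochhammer symbol `(c)_k = c (c+1) ⋯ (c+k−1)`. -/
noncomputable def poch (c : ℝ) (k : ℕ) : ℝ := ∏ i ∈ Finset.range k, (c + i)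

/-- The monic Krawtchouk polynomial
`K_n(x;p,a) = Σ_{j=0}^{n} ((−n)_j (−a+j)_{n−j} / j!) p^{n−j} (−x)_j`,
where `(−x)_j = Π_{i=0}^{j−1} (i − x)` as a polynomial in `x`. -/
noncomputable def kraw (n : ℕ) (p a : ℝ) : Polynomial ℝ :=
  ∑ j ∈ Finset.range (n + 1),
    Polynomial.C (poch (-(n : ℝ)) j * poch (-a + j) (n - j) / (Nat.factorial j) * p ^ (n - j)) *
      ∏ i ∈ Finset.range j, (Polynomial.C (i : ℝ) - Polynomial.X)

/-- The type-2 exceptional Krawtchouk polynomial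
`K̂_n^{(2,d)}(x;p,M) = [(M−x) K_d(x−M−1;p,−M−2) K_n(x+1;p,M)
  + (x+1) K_d(x−M;p,−M−2) K_n(x;p,M)]/(M+d+1−n)`. -/
noncomputable def xkraw2 (d n : ℕ) (p M : ℝ) : Polynomial ℝ :=
  Polynomial.C (1 / (M + (d : ℝ) + 1 - (n : ℝ))) *
    ((Polynomial.C M - Polynomial.X) *
        (kraw d p (-M - 2)).comp (Polynomial.X - Polynomial.C (M + 1)) *
        (kraw n p M).comp (Polynomial.X + 1) +
      (Polynomial.X + 1) * (kraw d p (-M - 2)).comp (Polynomial.X - Polynomial.C M) *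
        kraw n p M)

/-- The type-4 exceptional Krawtchouk polynomial
`K̂_n^{(4,d)}(x;p,N) = p(x−N) K_d(x−N−1;1−p,−N−2) K_n(x+1;p,N)
  − (p−1)(x+1) K_d(x−N;1−p,−N−2) K_n(x;p,N)`. -/
noncomputable def xkraw4 (d n : ℕ) (p N : ℝ) : Polynomial ℝ :=
  Polynomial.C p * (Polynomial.X - Polynomial.C N) *
      (kraw d (1 - p) (-N - 2)).comp (Polynomial.X - Polynomial.C (N + 1)) *
      (kraw n p N).comp (Polynomial.X + 1) -
    Polynomial.C (p - 1) * (Polynomial.X + 1) *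
      (kraw d (1 - p) (-N - 2)).comp (Polynomial.X - Polynomial.C N) * kraw n p N


section KrawtchoukAux

/-- evaluation form -/
noncomputable def Kv (n : ℕ) (q a t : ℝ) : ℝ :=
  ∑ j ∈ Finset.range (n + 1),
    poch (-(n : ℝ)) j * poch (-a + j) (n - j) / (Nat.factorial j) * q ^ (n - j) *
      ∏ i ∈ Finset.range j, ((i : ℝ) - t)

lemma eval_kraw (n : ℕ) (q a t : ℝ) : (kraw n q a).eval t = Kv n q a t := by
  simp [kraw, Kv, eval_finset_sum, eval_prod]

lemma poch_zero (c : ℝ) : poch c 0 = 1 := by simp [poch]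

lemma poch_succ (c : ℝ) (k : ℕ) : poch c (k + 1) = poch c k * (c + k) :=
  Finset.prod_range_succ _ _

lemma poch_succ' (c : ℝ) (k : ℕ) : poch c (k + 1) = c * poch (c + 1) k := by
  rw [poch, Finset.prod_range_succ']
  simp only [Nat.cast_zero, add_zero, mul_comm]
  rw [poch]
  congr 1
  refine Finset.prod_congr rfl fun i _ => ?_
  push_cast; ring

lemma poch_add (c : ℝ) (j k : ℕ) : poch c (j + k) = poch c j * poch (c + j) k := by
  rw [poch, Finset.prod_range_add, poch, poch]
  congr 1
  refine Finset.prod_congr rfl fun i _ => ?_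
  push_cast; ring

lemma poch_neg_nat (n j : ℕ) : poch (-(n : ℝ)) j = (-1) ^ j * (n.descFactorial j : ℝ) := by
  induction j with
  | zero => simp [poch]
  | succ k ih =>
      rw [poch_succ, ih, Nat.descFactorial_succ]
      rcases le_or_gt k n with h | h
      · push_cast [h]; ring
      · have h1 : n.descFactorial k = 0 := Nat.descFactorial_eq_zero_iff_lt.2 (by omega)
        have h2 : n - k = 0 := by omega
        rw [h1, h2]; simp

lemma poch_neg_ne_zero {N k : ℕ} (h : k ≤ N) : poch (-(N : ℝ)) k ≠ 0 := by
  rw [poch]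
  refine Finset.prod_ne_zero_iff.2 fun i hi => ?_
  have : i < N := lt_of_lt_of_le (Finset.mem_range.1 hi) h
  have : (i : ℝ) < N := by exact_mod_cast this
  intro hc; nlinarith

lemma Kv_zero (n : ℕ) (q a : ℝ) : Kv n q a 0 = poch (-a) n * q ^ n := by
  rw [Kv, Finset.sum_eq_single 0]
  · simp [poch]
  · intro j hj hj0
    have hz : ∏ i ∈ Finset.range j, ((i : ℝ) - 0) = 0 := by
      apply Finset.prod_eq_zero (Finset.mem_range.2 (Nat.pos_of_ne_zero hj0))
      simp
    rw [hz]; ring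
  · intro h; exact absurd (Finset.mem_range.2 (Nat.succ_pos n)) h

lemma Kv_top (n : ℕ) (q a : ℝ) : Kv n q a a = poch (-a) n * (q - 1) ^ n := by
  have key : ∀ j ∈ Finset.range (n + 1),
      poch (-(n : ℝ)) j * poch (-a + j) (n - j) / (Nat.factorial j) * q ^ (n - j) *
        ∏ i ∈ Finset.range j, ((i : ℝ) - a)
      = poch (-a) n * ((-1) ^ j * q ^ (n - j) * (n.choose j : ℝ)) := by
    intro j hj
    have hjn : j ≤ n := Nat.lt_succ_iff.1 (Finset.mem_range.1 hj)
    have hphi : ∏ i ∈ Finset.range j, ((i : ℝ) - a) = poch (-a) j := by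
      rw [poch]; exact Finset.prod_congr rfl fun i _ => by ring
    have hsplit : poch (-a) j * poch (-a + j) (n - j) = poch (-a) n := by
      rw [← poch_add]; congr 1; omega
    have hdesc : (n.descFactorial j : ℝ) = (Nat.factorial j : ℝ) * (n.choose j : ℝ) := by
      exact_mod_cast congrArg (Nat.cast (R := ℝ)) (Nat.descFactorial_eq_factorial_mul_choose n j)
    have hfact : (Nat.factorial j : ℝ) ≠ 0 := Nat.cast_ne_zero.2 (Nat.factorial_ne_zero j)
    rw [hphi, poch_neg_nat, hdesc]
    field_simp
    linear_combination ((n.choose j : ℝ) * q^(n-j)) * hsplit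
  rw [Kv, Finset.sum_congr rfl key, ← Finset.mul_sum]
  congr 1
  have h := add_pow (-1 : ℝ) q n
  have hq : (q - 1) = (-1) + q := by ring
  rw [hq, h]


noncomputable def phi (j : ℕ) (t : ℝ) : ℝ := ∏ i ∈ Finset.range j, ((i : ℝ) - t)

lemma phi_succ (j : ℕ) (t : ℝ) : phi (j + 1) t = phi j t * ((j : ℝ) - t) :=
  Finset.prod_range_succ _ _

lemma phi_shift_up (j : ℕ) (t : ℝ) : phi (j + 1) (t + 1) = (-1 - t) * phi j t := by
  rw [phi, Finset.prod_range_succ']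
  have h1 : ∀ i ∈ Finset.range j, ((i + 1 : ℕ) : ℝ) - (t + 1) = (i : ℝ) - t := by
    intro i _; push_cast; ring
  rw [Finset.prod_congr rfl h1]
  simp only [phi]; push_cast; ring

lemma phi_shift_down (j : ℕ) (t : ℝ) :
    t * phi (j + 1) (t - 1) = -(phi j t * ((j : ℝ) - t) * ((j : ℝ) + 1 - t)) := by
  have e1 : phi (j + 1) (t - 1) = ∏ i ∈ Finset.range (j + 1), ((i : ℝ) + 1 - t) := by
    rw [phi]; exact Finset.prod_congr rfl fun i _ => by ring
  have e2 : phi (j + 2) t = (∏ i ∈ Finset.range (j + 1), ((i : ℝ) + 1 - t)) * (0 - t) := by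
    rw [phi, Finset.prod_range_succ']
    congr 1
    · refine Finset.prod_congr rfl fun i _ => ?_; push_cast; ring
    · norm_num
  have e3 : phi (j + 2) t = phi j t * ((j : ℝ) - t) * ((j : ℝ) + 1 - t) := by
    have := phi_succ (j + 1) t
    rw [phi_succ j t] at this
    rw [this]; push_cast; ring
  rw [e1]
  have : t * ∏ i ∈ Finset.range (j + 1), ((i : ℝ) + 1 - t)
      = -(phi (j + 2) t) := by rw [e2]; ring
  rw [this, e3]

lemma Tj (n j : ℕ) (q a t : ℝ) :
    q * (a - t) * phi j (t + 1) + (1 - q) * t * phi j (t - 1)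
      - (q * (a - t) + (1 - q) * t - (n : ℝ)) * phi j t
    = q * (j : ℝ) * ((j : ℝ) - 1 - a) * phi (j - 1) t + ((n : ℝ) - (j : ℝ)) * phi j t := by
  cases j with
  | zero => simp [phi]
  | succ k =>
      have h1 := phi_shift_up k t
      have h2 := phi_shift_down k t
      have h3 := phi_succ k t
      have hk : k + 1 - 1 = k := by omega
      rw [hk]
      push_cast
      linear_combination (q * (a - t)) * h1 + (1 - q) * h2 +
        (-(q * (a - t) + (1 - q) * t - (n : ℝ)) - ((n : ℝ) - ((k : ℝ) + 1))) * h3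

lemma coeff_rec (n j : ℕ) (hj : j < n) (q a : ℝ) :
    (poch (-(n : ℝ)) (j + 1) * poch (-a + ((j + 1 : ℕ) : ℝ)) (n - (j + 1)) /
        (Nat.factorial (j + 1)) * q ^ (n - (j + 1))) * (q * (((j : ℝ) + 1)) * ((j : ℝ) - a))
    + (poch (-(n : ℝ)) j * poch (-a + (j : ℝ)) (n - j) / (Nat.factorial j) * q ^ (n - j)) *
        ((n : ℝ) - (j : ℝ)) = 0 := by
  have hk : n - j = (n - (j + 1)) + 1 := by omega
  have harg : (-a + ((j + 1 : ℕ) : ℝ)) = (-a + (j : ℝ)) + 1 := by push_cast; ring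
  rw [harg, hk, poch_succ' (-a + (j : ℝ)) (n - (j+1)), poch_succ, pow_succ, Nat.factorial_succ]
  have hfj : ((Nat.factorial j : ℕ) : ℝ) ≠ 0 := Nat.cast_ne_zero.2 (Nat.factorial_ne_zero j)
  have hj1 : (((j + 1) : ℕ) : ℝ) ≠ 0 := by positivity
  push_cast
  field_simp
  ring

lemma Kv_de (n : ℕ) (q a t : ℝ) :
    q * (a - t) * Kv n q a (t + 1) + (1 - q) * t * Kv n q a (t - 1)
      = (q * (a - t) + (1 - q) * t - (n : ℝ)) * Kv n q a t := by
  have hKv : ∀ s : ℝ, Kv n q a s = ∑ j ∈ Finset.range (n + 1),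
      (poch (-(n : ℝ)) j * poch (-a + j) (n - j) / (Nat.factorial j) * q ^ (n - j)) * phi j s := by
    intro s; rw [Kv]; exact Finset.sum_congr rfl fun j _ => by rw [phi]
  rw [← sub_eq_zero]
  have step1 : q * (a - t) * Kv n q a (t + 1) + (1 - q) * t * Kv n q a (t - 1)
      - (q * (a - t) + (1 - q) * t - (n : ℝ)) * Kv n q a t
      = ∑ j ∈ Finset.range (n + 1),
          (poch (-(n : ℝ)) j * poch (-a + j) (n - j) / (Nat.factorial j) * q ^ (n - j)) *
            (q * (j : ℝ) * ((j : ℝ) - 1 - a) * phi (j - 1) t + ((n : ℝ) - (j : ℝ)) * phi j t) := by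
    rw [hKv, hKv, hKv, Finset.mul_sum, Finset.mul_sum, Finset.mul_sum, ← Finset.sum_add_distrib,
      ← Finset.sum_sub_distrib]
    refine Finset.sum_congr rfl fun j hj => ?_
    have h := Tj n j q a t
    linear_combination (poch (-(n : ℝ)) j * poch (-a + j) (n - j) / (Nat.factorial j) *
      q ^ (n - j)) * h
  rw [step1]
  have split : ∀ j : ℕ,
      (poch (-(n : ℝ)) j * poch (-a + j) (n - j) / (Nat.factorial j) * q ^ (n - j)) *
        (q * (j : ℝ) * ((j : ℝ) - 1 - a) * phi (j - 1) t + ((n : ℝ) - (j : ℝ)) * phi j t)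
      = (poch (-(n : ℝ)) j * poch (-a + j) (n - j) / (Nat.factorial j) * q ^ (n - j)) *
          (q * (j : ℝ) * ((j : ℝ) - 1 - a) * phi (j - 1) t)
        + (poch (-(n : ℝ)) j * poch (-a + j) (n - j) / (Nat.factorial j) * q ^ (n - j)) *
          (((n : ℝ) - (j : ℝ)) * phi j t) := fun j => by ring
  simp only [split]
  rw [Finset.sum_add_distrib]
  rw [Finset.sum_range_succ' (fun j =>
      (poch (-(n : ℝ)) j * poch (-a + j) (n - j) / (Nat.factorial j) * q ^ (n - j)) *
        (q * (j : ℝ) * ((j : ℝ) - 1 - a) * phi (j - 1) t))]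
  rw [Finset.sum_range_succ (fun j =>
      (poch (-(n : ℝ)) j * poch (-a + j) (n - j) / (Nat.factorial j) * q ^ (n - j)) *
        (((n : ℝ) - (j : ℝ)) * phi j t))]
  simp only [Nat.cast_zero, mul_zero, zero_mul, add_zero, sub_self, zero_add]
  rw [← Finset.sum_add_distrib]
  refine Finset.sum_eq_zero fun j hj => ?_
  have hjn : j < n := Finset.mem_range.1 hj
  have hc := coeff_rec n j hjn q a
  have hred : j + 1 - 1 = j := by omega
  rw [hred]
  push_cast at hc ⊢
  linear_combination (phi j t) * hc

/-- Two sequences satisfying the same second-order recurrence and agreeing at 0 agree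
everywhere (the recurrence at 0 has vanishing trailing coefficient by convention `0-1=0`). -/
lemma grid_all (A B C2 u v : ℕ → ℝ) (hA : ∀ x, A x ≠ 0)
    (hu : ∀ x, A x * u (x + 1) = B x * u x + C2 x * u (x - 1))
    (hv : ∀ x, A x * v (x + 1) = B x * v x + C2 x * v (x - 1))
    (h0 : u 0 = v 0) : ∀ x, u x = v x := by
  intro x
  induction x using Nat.strong_induction_on with
  | _ x ih =>
    match x with
    | 0 => exact h0
    | Nat.succ k =>
        have h1 : u k = v k := ih k (by omega)
        have h2 : u (k - 1) = v (k - 1) := ih (k - 1) (by omega)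
        have := hu k
        rw [h1, h2, ← hv k] at this
        exact mul_left_cancel₀ (hA k) this

lemma grid_le (M : ℕ) (A B C2 u v : ℕ → ℝ) (hA : ∀ x, x < M → A x ≠ 0)
    (hu : ∀ x, A x * u (x + 1) = B x * u x + C2 x * u (x - 1))
    (hv : ∀ x, A x * v (x + 1) = B x * v x + C2 x * v (x - 1))
    (h0 : u 0 = v 0) : ∀ x, x ≤ M → u x = v x := by
  intro x
  induction x using Nat.strong_induction_on with
  | _ x ih =>
    match x with
    | 0 => exact fun _ => h0
    | Nat.succ k =>
        intro hkM
        have h1 : u k = v k := ih k (by omega) (by omega)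
        have h2 : u (k - 1) = v (k - 1) := ih (k - 1) (by omega) (by omega)
        have := hu k
        rw [h1, h2, ← hv k] at this
        exact mul_left_cancel₀ (hA k (by omega)) this

lemma Kv_reflect_nat (d : ℕ) (q a : ℝ) (hq : q ≠ 0) (ha : ∀ k : ℕ, a - (k : ℝ) ≠ 0) (x : ℕ) :
    Kv d (1 - q) a (a - (x : ℝ)) = (-1 : ℝ) ^ d * Kv d q a (x : ℝ) := by
  have hu : ∀ x : ℕ, (q * (a - (x : ℝ))) * Kv d (1 - q) a (a - ((x + 1 : ℕ) : ℝ))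
      = ((1 - q) * (x : ℝ) + q * (a - (x : ℝ)) - (d : ℝ)) * Kv d (1 - q) a (a - (x : ℝ))
        + (-((1 - q) * (x : ℝ))) * Kv d (1 - q) a (a - ((x - 1 : ℕ) : ℝ)) := by
    intro x
    cases x with
    | zero =>
        have h := Kv_de d (1 - q) a a
        push_cast
        simp only [sub_zero]
        linear_combination h
    | succ k =>
        have h := Kv_de d (1 - q) a (a - ((k : ℝ) + 1))
        have e1 : a - ((k : ℝ) + 1) + 1 = a - (k : ℝ) := by ring
        have e2 : a - ((k : ℝ) + 1) - 1 = a - ((k : ℝ) + 1 + 1) := by ring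
        rw [e1, e2] at h
        have g3 : (k + 1 - 1 : ℕ) = k := by omega
        rw [g3]
        push_cast
        linear_combination h
  have hv : ∀ x : ℕ, (q * (a - (x : ℝ))) * ((-1 : ℝ) ^ d * Kv d q a ((x + 1 : ℕ) : ℝ))
      = ((1 - q) * (x : ℝ) + q * (a - (x : ℝ)) - (d : ℝ)) * ((-1 : ℝ) ^ d * Kv d q a (x : ℝ))
        + (-((1 - q) * (x : ℝ))) * ((-1 : ℝ) ^ d * Kv d q a ((x - 1 : ℕ) : ℝ)) := by
    intro x
    cases x with
    | zero =>
        have h := Kv_de d q a 0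
        have e1 : (0 : ℝ) + 1 = (1 : ℝ) := by norm_num
        rw [e1] at h
        push_cast
        linear_combination ((-1 : ℝ) ^ d) * h
    | succ k =>
        have h := Kv_de d q a ((k : ℝ) + 1)
        have e2 : (k : ℝ) + 1 - 1 = (k : ℝ) := by ring
        rw [e2] at h
        have g3 : (k + 1 - 1 : ℕ) = k := by omega
        rw [g3]
        push_cast
        linear_combination ((-1 : ℝ) ^ d) * h
  have h0 : Kv d (1 - q) a (a - ((0 : ℕ) : ℝ)) = (-1 : ℝ) ^ d * Kv d q a ((0 : ℕ) : ℝ) := by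
    rw [show ((0 : ℕ) : ℝ) = (0 : ℝ) by norm_num, sub_zero, Kv_top, Kv_zero]
    have e : (1 - q - 1 : ℝ) = -q := by ring
    rw [e, neg_pow]
    ring
  exact grid_all (fun x => q * (a - (x : ℝ)))
    (fun x => (1 - q) * (x : ℝ) + q * (a - (x : ℝ)) - (d : ℝ))
    (fun x => -((1 - q) * (x : ℝ)))
    (fun x => Kv d (1 - q) a (a - (x : ℝ))) (fun x => (-1 : ℝ) ^ d * Kv d q a (x : ℝ))
    (fun x => mul_ne_zero hq (ha x)) hu hv h0 x

lemma kraw_reflect (d : ℕ) (q a : ℝ) (hq : q ≠ 0) (ha : ∀ k : ℕ, a - (k : ℝ) ≠ 0) :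
    (kraw d (1 - q) a).comp (Polynomial.C a - Polynomial.X)
      = Polynomial.C ((-1 : ℝ) ^ d) * kraw d q a := by
  apply Polynomial.eq_of_infinite_eval_eq
  apply Set.infinite_of_injective_forall_mem (f := fun k : ℕ => (k : ℝ)) Nat.cast_injective
  intro k
  simp only [Set.mem_setOf_eq, eval_comp, eval_sub, eval_C, eval_X, eval_mul]
  rw [eval_kraw, eval_kraw]
  exact Kv_reflect_nat d q a hq ha k

lemma Kv_reflect (d : ℕ) (q a : ℝ) (hq : q ≠ 0) (ha : ∀ k : ℕ, a - (k : ℝ) ≠ 0) (t : ℝ) :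
    Kv d (1 - q) a (a - t) = (-1 : ℝ) ^ d * Kv d q a t := by
  have h := congrArg (Polynomial.eval t) (kraw_reflect d q a hq ha)
  simp only [eval_comp, eval_sub, eval_C, eval_X, eval_mul] at h
  rw [eval_kraw, eval_kraw] at h
  exact h

lemma Kv_complement (N n : ℕ) (hn : n ≤ N) (p : ℝ) (hp0 : p ≠ 0) (hp1 : p - 1 ≠ 0) :
    ∀ x : ℕ, x ≤ N →
    poch (-(N : ℝ)) n * p ^ n * (p - 1) ^ x * Kv (N - n) p (N : ℝ) ((N : ℝ) - (x : ℝ))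
      = poch (-(N : ℝ)) (N - n) * p ^ x * (p - 1) ^ (N - n) * Kv n p (N : ℝ) (x : ℝ) := by
  have hA : ∀ x : ℕ, x < N → (N : ℝ) - (x : ℝ) ≠ 0 := by
    intro x hxN
    have : (x : ℝ) < N := by exact_mod_cast hxN
    intro hc; nlinarith
  have hu : ∀ x : ℕ, ((N : ℝ) - (x : ℝ)) *
        (poch (-(N : ℝ)) n * p ^ n * (p - 1) ^ (x + 1) * Kv (N - n) p (N : ℝ) ((N : ℝ) - ((x + 1 : ℕ) : ℝ)))
      = (-(p * (x : ℝ) + (1 - p) * ((N : ℝ) - (x : ℝ)) - ((N : ℝ) - (n : ℝ)))) *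
          (poch (-(N : ℝ)) n * p ^ n * (p - 1) ^ x * Kv (N - n) p (N : ℝ) ((N : ℝ) - (x : ℝ)))
        + (p * (p - 1) * (x : ℝ)) *
          (poch (-(N : ℝ)) n * p ^ n * (p - 1) ^ (x - 1) * Kv (N - n) p (N : ℝ) ((N : ℝ) - ((x - 1 : ℕ) : ℝ))) := by
    intro x
    cases x with
    | zero =>
        have h := Kv_de (N - n) p (N : ℝ) (N : ℝ)
        push_cast [Nat.cast_sub hn] at h ⊢
        simp only [sub_zero] at h ⊢
        have e1 : (N : ℝ) - ((N : ℝ)) = 0 := by ring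
        linear_combination (-(poch (-(N : ℝ)) n * p ^ n)) * h
    | succ k =>
        have h := Kv_de (N - n) p (N : ℝ) ((N : ℝ) - ((k : ℝ) + 1))
        have e1 : (N : ℝ) - ((k : ℝ) + 1) + 1 = (N : ℝ) - (k : ℝ) := by ring
        have e2 : (N : ℝ) - ((k : ℝ) + 1) - 1 = (N : ℝ) - ((k : ℝ) + 1 + 1) := by ring
        rw [e1, e2] at h
        have g3 : (k + 1 - 1 : ℕ) = k := by omega
        rw [g3]
        push_cast [Nat.cast_sub hn] at h ⊢
        linear_combination (-(poch (-(N : ℝ)) n * p ^ n * (p - 1) ^ (k + 1))) * h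
  have hv : ∀ x : ℕ, ((N : ℝ) - (x : ℝ)) *
        (poch (-(N : ℝ)) (N - n) * p ^ (x + 1) * (p - 1) ^ (N - n) * Kv n p (N : ℝ) ((x + 1 : ℕ) : ℝ))
      = (-(p * (x : ℝ) + (1 - p) * ((N : ℝ) - (x : ℝ)) - ((N : ℝ) - (n : ℝ)))) *
          (poch (-(N : ℝ)) (N - n) * p ^ x * (p - 1) ^ (N - n) * Kv n p (N : ℝ) (x : ℝ))
        + (p * (p - 1) * (x : ℝ)) *
          (poch (-(N : ℝ)) (N - n) * p ^ (x - 1) * (p - 1) ^ (N - n) * Kv n p (N : ℝ) ((x - 1 : ℕ) : ℝ)) := by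
    intro x
    cases x with
    | zero =>
        have h := Kv_de n p (N : ℝ) 0
        have e1 : (0 : ℝ) + 1 = (1 : ℝ) := by norm_num
        rw [e1] at h
        push_cast at h ⊢
        linear_combination (poch (-(N : ℝ)) (N - n) * (p - 1) ^ (N - n)) * h
    | succ k =>
        have h := Kv_de n p (N : ℝ) ((k : ℝ) + 1)
        have e2 : (k : ℝ) + 1 - 1 = (k : ℝ) := by ring
        rw [e2] at h
        have g3 : (k + 1 - 1 : ℕ) = k := by omega
        rw [g3]
        push_cast at h ⊢
        linear_combination (poch (-(N : ℝ)) (N - n) * (p - 1) ^ (N - n) * p ^ (k + 1)) * h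
  have h0 : poch (-(N : ℝ)) n * p ^ n * (p - 1) ^ 0 * Kv (N - n) p (N : ℝ) ((N : ℝ) - ((0 : ℕ) : ℝ))
      = poch (-(N : ℝ)) (N - n) * p ^ 0 * (p - 1) ^ (N - n) * Kv n p (N : ℝ) ((0 : ℕ) : ℝ) := by
    rw [show ((0 : ℕ) : ℝ) = (0 : ℝ) by norm_num, sub_zero, Kv_top, Kv_zero]
    ring
  exact grid_le N (fun x => (N : ℝ) - (x : ℝ))
    (fun x => -(p * (x : ℝ) + (1 - p) * ((N : ℝ) - (x : ℝ)) - ((N : ℝ) - (n : ℝ))))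
    (fun x => p * (p - 1) * (x : ℝ))
    (fun x => poch (-(N : ℝ)) n * p ^ n * (p - 1) ^ x * Kv (N - n) p (N : ℝ) ((N : ℝ) - (x : ℝ)))
    (fun x => poch (-(N : ℝ)) (N - n) * p ^ x * (p - 1) ^ (N - n) * Kv n p (N : ℝ) (x : ℝ))
    hA hu hv h0

end KrawtchoukAux

/-- On the grid `x ∈ {0,…,N−1}` the type-4 exceptional Krawtchouk polynomials are related to
type-2 ones: `K̂_n^{(4,d)}(x;p,N) = γ*_{n,d,N} p^{−x} (p−1)^x K̂_{N−n}^{(2,d)}(N−x−1;p,N)` with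
`γ*_{n,d,N} = (n+d+1) p^n (p−1)^{n−N+1} (−N)_n / ((−1)^{d+1} (−N)_{N−n})`. -/
theorem krawtchouk_exceptional4_to_2 (N : ℕ) (hN : 1 ≤ N) (p : ℝ)
    (hp0 : 0 < p) (hp1 : p < 1) (d : ℕ) (n : ℕ) (hnN : n ≤ N)
    (x : ℕ) (hx : x ≤ N - 1) :
    Polynomial.eval (x : ℝ) (xkraw4 d n p (N : ℝ)) =
      (((n : ℝ) + (d : ℝ) + 1) * p ^ n * (p - 1) ^ ((n : ℤ) - (N : ℤ) + 1) *
          poch (-(N : ℝ)) n / ((-1 : ℝ) ^ (d + 1) * poch (-(N : ℝ)) (N - n))) *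
        p ^ (-(x : ℤ)) * (p - 1) ^ x *
        Polynomial.eval ((N : ℝ) - (x : ℝ) - 1) (xkraw2 d (N - n) p (N : ℝ)) := by
  simp only [xkraw4, xkraw2, eval_mul, eval_sub, eval_add, eval_C, eval_X, eval_comp, eval_one,
    eval_kraw]
  have hp0' : p ≠ 0 := ne_of_gt hp0
  have hp1' : p - 1 ≠ 0 := by intro h; nlinarith
  have hxN : x + 1 ≤ N := by omega
  have ha : ∀ k : ℕ, (-(N : ℝ) - 2) - (k : ℝ) ≠ 0 := by
    intro k
    have h1 : (0:ℝ) ≤ (N:ℝ) := Nat.cast_nonneg N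
    have h2 : (0:ℝ) ≤ (k:ℝ) := Nat.cast_nonneg k
    intro hc; nlinarith
  -- reflection identities
  have r1 := Kv_reflect d p (-(N : ℝ) - 2) hp0' ha (-(x : ℝ) - 1)
  rw [show (-(N : ℝ) - 2) - (-(x : ℝ) - 1) = (x : ℝ) - ((N : ℝ) + 1) by ring] at r1
  have r2 := Kv_reflect d p (-(N : ℝ) - 2) hp0' ha (-(x : ℝ) - 2)
  rw [show (-(N : ℝ) - 2) - (-(x : ℝ) - 2) = (x : ℝ) - (N : ℝ) by ring] at r2
  rw [r1, r2]
  -- canonical forms for the type-2 arguments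
  rw [show ((N:ℝ) - (x:ℝ) - 1 - ((N:ℝ) + 1)) = (-(x:ℝ) - 2) by ring,
      show ((N:ℝ) - (x:ℝ) - 1 - (N:ℝ)) = (-(x:ℝ) - 1) by ring,
      show ((N:ℝ) - (x:ℝ) - 1 + 1) = ((N:ℝ) - (x:ℝ)) by ring,
      show ((N:ℝ) - ((N:ℝ) - (x:ℝ) - 1)) = ((x:ℝ) + 1) by ring]
  -- complement identities
  have c1 := Kv_complement N n hnN p hp0' hp1' x (by omega)
  have c2 := Kv_complement N n hnN p hp0' hp1' (x + 1) hxN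
  rw [show ((N:ℝ) - ((x + 1 : ℕ) : ℝ)) = ((N:ℝ) - (x:ℝ) - 1) by push_cast; ring,
      show (((x + 1 : ℕ)) : ℝ) = ((x:ℝ) + 1) by push_cast; ring] at c2
  have hPn : poch (-(N : ℝ)) n ≠ 0 := poch_neg_ne_zero hnN
  have hPm : poch (-(N : ℝ)) (N - n) ≠ 0 := poch_neg_ne_zero (by omega)
  have hdenA : poch (-(N : ℝ)) n * p ^ n * (p - 1) ^ x ≠ 0 := by
    exact mul_ne_zero (mul_ne_zero hPn (pow_ne_zero _ hp0')) (pow_ne_zero _ hp1')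
  have hdenB : poch (-(N : ℝ)) n * p ^ n * (p - 1) ^ (x + 1) ≠ 0 := by
    exact mul_ne_zero (mul_ne_zero hPn (pow_ne_zero _ hp0')) (pow_ne_zero _ hp1')
  have hKmA : Kv (N - n) p (N : ℝ) ((N : ℝ) - (x : ℝ))
      = poch (-(N : ℝ)) (N - n) * p ^ x * (p - 1) ^ (N - n) * Kv n p (N : ℝ) (x : ℝ) /
          (poch (-(N : ℝ)) n * p ^ n * (p - 1) ^ x) := by
    rw [eq_div_iff hdenA]; linear_combination c1
  have hKmB : Kv (N - n) p (N : ℝ) ((N : ℝ) - (x : ℝ) - 1)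
      = poch (-(N : ℝ)) (N - n) * p ^ (x + 1) * (p - 1) ^ (N - n) * Kv n p (N : ℝ) ((x : ℝ) + 1) /
          (poch (-(N : ℝ)) n * p ^ n * (p - 1) ^ (x + 1)) := by
    rw [eq_div_iff hdenB]; linear_combination c2
  rw [hKmA, hKmB]
  -- eliminate the integer powers
  have hpowN : (p - 1) ^ N = (p - 1) ^ n * (p - 1) ^ (N - n) := by
    rw [← pow_add]; congr 1; omega
  have hz1 : (p - 1) ^ ((n : ℤ) - (N : ℤ) + 1)
      = (p - 1) ^ (n + 1) * ((p - 1) ^ n * (p - 1) ^ (N - n))⁻¹ := by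
    rw [show ((n : ℤ) - (N : ℤ) + 1) = ((n + 1 : ℕ) : ℤ) - ((N : ℕ) : ℤ) by push_cast; ring,
      zpow_sub₀ hp1', zpow_natCast, zpow_natCast, div_eq_mul_inv, hpowN]
  have hz2 : p ^ (-(x : ℤ)) = ((p : ℝ) ^ x)⁻¹ := by
    rw [zpow_neg, zpow_natCast]
  rw [hz1, hz2, Nat.cast_sub hnN]
  rw [show ((N:ℝ) + (d:ℝ) + 1 - ((N:ℝ) - (n:ℝ))) = ((n:ℝ) + (d:ℝ) + 1) by ring]
  have hnd : ((n:ℝ) + (d:ℝ) + 1) ≠ 0 := by positivity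
  field_simp
  have he : ((-1:ℝ)) ^ (d * 2) = 1 := Even.neg_one_pow ⟨d, by omega⟩
  have ho : ((-1:ℝ)) ^ (d * 2 + 1) = -1 := by rw [pow_succ, he]; ring
  ring_nf
  simp only [he, ho]
  ring
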